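/- arXiv:1307.4388 — 2 statements merged into one kernel-verified Lean document; each statement's English description precedes it below -/
import Mathlib

section
/- The fixed point equation for η₁ has a unique positive solution: given σ² > 0, α ≥ 0, and a nonnegative bounded random variable X (representing B₁²/B), the map η ↦ (σ² + α·E[B] − α·E[X²η/(1+Xη)])⁻¹ with E[B] ≥ E[X] ≥ 0 finite has a unique fixed point η₁ in (0, 1/σ²]. -/
/-!
Multiplying the fixed-point equation by `η` turns it into `φ η = 1` with
`φ η = σ² η + α (c - E[X]) η + α E[X η / (1 + X η)]`, because
`η (X - X² η / (1 + X η)) = X η / (1 + X η)`. Each summand of `φ` is continuous and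
nondecreasing on `[0, ∞)` and the first is strictly increasing, while `φ 0 = 0` and
`φ (1 / σ²) ≥ 1`; the intermediate value theorem gives exactly one solution in `(0, 1 / σ²]`.
-/

open MeasureTheory Set

theorem existsUnique_mem_Ioc_eq_of_strictMonoOn {α δ : Type*} [ConditionallyCompleteLinearOrder α]
    [TopologicalSpace α] [OrderTopology α] [DenselyOrdered α] [LinearOrder δ]
    [TopologicalSpace δ] [OrderClosedTopology δ] {f : α → δ} {a b : α} {y : δ} (hab : a ≤ b)
    (hf : ContinuousOn f (Icc a b)) (hf_mono : StrictMonoOn f (Icc a b)) (hay : f a < y)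
    (hyb : y ≤ f b) : ∃! x, x ∈ Ioc a b ∧ f x = y := by
  obtain ⟨x, hx, rfl⟩ := intermediate_value_Icc hab hf ⟨hay.le, hyb⟩
  refine ⟨x, ⟨⟨lt_of_le_of_ne hx.1 ?_, hx.2⟩, rfl⟩, fun x' hx' => ?_⟩
  · rintro rfl
    exact hay.false
  · exact hf_mono.injOn (Ioc_subset_Icc_self hx'.1) hx hx'.2

section Saturation

variable {x s t : ℝ}

theorem abs_mul_div_one_add_mul_le_one (hx : 0 ≤ x) (ht : 0 ≤ t) :
    |x * t / (1 + x * t)| ≤ 1 := by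
  rw [abs_of_nonneg (by positivity)]
  exact div_le_one_of_le₀ (by linarith) (by positivity)

theorem mul_div_one_add_mul_le_mul_div_one_add_mul (hx : 0 ≤ x) (hs : 0 ≤ s) (hst : s ≤ t) :
    x * s / (1 + x * s) ≤ x * t / (1 + x * t) := by
  have ht : 0 ≤ t := hs.trans hst
  rw [div_le_div_iff₀ (by positivity) (by positivity)]
  nlinarith [mul_nonneg hx (sub_nonneg.2 hst)]

theorem mul_sq_mul_div_one_add_mul (hx : 0 ≤ x) (ht : 0 ≤ t) :
    t * (x ^ 2 * t / (1 + x * t)) = t * x - x * t / (1 + x * t) := by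
  field_simp
  ring

end Saturation

section Integrals

variable {Ω : Type*} [MeasurableSpace Ω] {μ : Measure Ω} [IsFiniteMeasure μ] {X : Ω → ℝ}

theorem integrable_mul_div_one_add_mul (hX : Measurable X) (hX₀ : ∀ ω, 0 ≤ X ω) {t : ℝ}
    (ht : 0 ≤ t) : Integrable (fun ω => X ω * t / (1 + X ω * t)) μ :=
  Integrable.of_bound (Measurable.aestronglyMeasurable (by fun_prop)) 1 <|
    ae_of_all _ fun ω => abs_mul_div_one_add_mul_le_one (hX₀ ω) ht

theorem monotoneOn_integral_mul_div_one_add_mul (hX : Measurable X) (hX₀ : ∀ ω, 0 ≤ X ω) :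
    MonotoneOn (fun t => ∫ ω, X ω * t / (1 + X ω * t) ∂μ) (Ici 0) := fun _ hs _ ht hst =>
  integral_mono (integrable_mul_div_one_add_mul hX hX₀ hs)
    (integrable_mul_div_one_add_mul hX hX₀ ht)
    fun ω => mul_div_one_add_mul_le_mul_div_one_add_mul (hX₀ ω) hs hst

theorem continuousOn_integral_mul_div_one_add_mul (hX : Measurable X) (hX₀ : ∀ ω, 0 ≤ X ω) :
    ContinuousOn (fun t => ∫ ω, X ω * t / (1 + X ω * t) ∂μ) (Ici 0) := by
  refine continuousOn_of_dominated (bound := fun _ => 1)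
    (fun t _ => Measurable.aestronglyMeasurable (by fun_prop))
    (fun t ht => ae_of_all _ fun ω => abs_mul_div_one_add_mul_le_one (hX₀ ω) ht)
    (integrable_const 1) (ae_of_all _ fun ω => ?_)
  exact ContinuousOn.div (by fun_prop) (by fun_prop) fun t ht =>
    (add_pos_of_pos_of_nonneg one_pos (mul_nonneg (hX₀ ω) ht)).ne'

theorem mul_integral_sq_mul_div_one_add_mul (hX : Measurable X) (hX_int : Integrable X μ)
    (hX₀ : ∀ ω, 0 ≤ X ω) {t : ℝ} (ht : 0 ≤ t) :
    t * ∫ ω, X ω ^ 2 * t / (1 + X ω * t) ∂μ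
      = t * ∫ ω, X ω ∂μ - ∫ ω, X ω * t / (1 + X ω * t) ∂μ := by
  rw [← integral_const_mul, ← integral_const_mul, ← integral_sub (hX_int.const_mul t)
    (integrable_mul_div_one_add_mul hX hX₀ ht)]
  exact integral_congr_ae <| ae_of_all _ fun ω => mul_sq_mul_div_one_add_mul (hX₀ ω) ht

end Integrals

theorem eta1_fixed_point_exists_unique
    {Ω : Type*} [MeasurableSpace Ω] (μ : Measure Ω) [IsProbabilityMeasure μ]
    (X : Ω → ℝ) (hXmeas : Measurable X) (hXnonneg : ∀ ω, 0 ≤ X ω)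
    (Mb : ℝ) (hXbdd : ∀ ω, X ω ≤ Mb)
    (σ2 α c : ℝ) (hσ : 0 < σ2) (hα : 0 ≤ α) (hc : ∫ ω, X ω ∂μ ≤ c) :
    ∃! η : ℝ, η ∈ Set.Ioc 0 (1 / σ2) ∧
      (σ2 + α * c - α * ∫ ω, (X ω) ^ 2 * η / (1 + X ω * η) ∂μ)⁻¹ = η := by
  have hX_int : Integrable X μ := Integrable.of_bound hXmeas.aestronglyMeasurable Mb <|
    ae_of_all _ fun ω => (Real.norm_of_nonneg (hXnonneg ω)).trans_le (hXbdd ω)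
  set g := fun η => ∫ ω, X ω * η / (1 + X ω * η) ∂μ
  set φ := fun η => (σ2 + α * c - α * ∫ ω, (X ω) ^ 2 * η / (1 + X ω * η) ∂μ) * η
  have hφ : EqOn φ (fun η => σ2 * η + α * ((c - ∫ ω, X ω ∂μ) * η + g η)) (Ici 0) := by
    intro η hη
    have := mul_integral_sq_mul_div_one_add_mul hXmeas hX_int hXnonneg (μ := μ) hη
    simp only [φ, g]
    linear_combination (-α) * this
  have hφ_mono : StrictMonoOn φ (Ici 0) := by
    refine StrictMonoOn.congr ?_ hφ.symm
    refine (strictMono_mul_left_of_pos hσ).strictMonoOn _ |>.add_monotone ?_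
    refine fun _ hs _ ht hst => mul_le_mul_of_nonneg_left ?_ hα
    exact add_le_add (mul_le_mul_of_nonneg_left hst (sub_nonneg.2 hc))
      (monotoneOn_integral_mul_div_one_add_mul hXmeas hXnonneg hs ht hst)
  have hφ_cont : ContinuousOn φ (Ici 0) := by
    refine ContinuousOn.congr ?_ hφ
    have hg := continuousOn_integral_mul_div_one_add_mul hXmeas hXnonneg (μ := μ)
    fun_prop
  have hσ_inv : (0 : ℝ) ≤ 1 / σ2 := by positivity
  have hφ_top : 1 ≤ φ (1 / σ2) := by
    rw [hφ (mem_Ici.2 hσ_inv)]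
    beta_reduce
    rw [mul_one_div_cancel hσ.ne', le_add_iff_nonneg_right]
    refine mul_nonneg hα (add_nonneg (mul_nonneg (sub_nonneg.2 hc) hσ_inv) ?_)
    exact integral_nonneg fun ω => by have := hXnonneg ω; positivity
  have hsol := existsUnique_mem_Ioc_eq_of_strictMonoOn hσ_inv
    (hφ_cont.mono Icc_subset_Ici_self) (hφ_mono.mono Icc_subset_Ici_self)
    (by simp [φ]) hφ_top
  refine (existsUnique_congr fun η => and_congr_right fun hη => ?_).1 hsol
  rw [inv_eq_iff_eq_inv, mul_eq_one_iff_eq_inv₀ hη.1.ne']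
end

section
/- Monotone deterministic-equivalent comparison: with η₁* the fixed point of η = (σ² + αc + α·E[X/(1+Xη)])⁻¹ for bounded nonnegative random variable X, constant c ≥ 0, the resulting SINR β·η₁* is strictly decreasing in α (for fixed σ², c, X with P(X>0)>0). -/
/-!
Multiplying the fixed-point equation by `η` turns it into `F α η = 1` with
`F α t = σ² t + α (c t + E[X t / (1 + X t)])`. Since `x ↦ x / (1 + x)` is increasing, `F α` is
nondecreasing in `t`, and since `E[X t / (1 + X t)] > 0` for `t > 0`, `F` is strictly increasing
in `α`. So if `a < b` and `η a ≤ η b`, then `1 = F b (η b) ≥ F b (η a) > F a (η a) = 1`.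
-/

open MeasureTheory

lemma div_one_add_le_div_one_add {x y : ℝ} (hx : 0 ≤ x) (hxy : x ≤ y) :
    x / (1 + x) ≤ y / (1 + y) := by
  rw [div_le_div_iff₀ (by linarith) (by linarith)]
  nlinarith

section Saturation

variable {Ω : Type*} [MeasurableSpace Ω] {μ : Measure Ω} {Y Z : Ω → ℝ}

lemma integrable_div_one_add [IsFiniteMeasure μ] (hYm : Measurable Y) (hY : ∀ ω, 0 ≤ Y ω) :
    Integrable (fun ω => Y ω / (1 + Y ω)) μ := by
  refine (integrable_const (1 : ℝ)).mono'
    (hYm.div (measurable_const.add hYm)).aestronglyMeasurable (ae_of_all _ fun ω => ?_)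
  have hpos : 0 < 1 + Y ω := by linarith [hY ω]
  rw [Real.norm_eq_abs, abs_of_nonneg (div_nonneg (hY ω) hpos.le), div_le_one hpos]
  linarith

lemma integral_div_one_add_mono [IsFiniteMeasure μ] (hYm : Measurable Y) (hZm : Measurable Z)
    (hY : ∀ ω, 0 ≤ Y ω) (hYZ : ∀ ω, Y ω ≤ Z ω) :
    ∫ ω, Y ω / (1 + Y ω) ∂μ ≤ ∫ ω, Z ω / (1 + Z ω) ∂μ :=
  integral_mono (integrable_div_one_add hYm hY)
    (integrable_div_one_add hZm fun ω => (hY ω).trans (hYZ ω))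
    fun ω => div_one_add_le_div_one_add (hY ω) (hYZ ω)

lemma integral_div_one_add_pos [IsFiniteMeasure μ] (hYm : Measurable Y) (hY : ∀ ω, 0 ≤ Y ω)
    (hYpos : 0 < μ {ω | 0 < Y ω}) :
    0 < ∫ ω, Y ω / (1 + Y ω) ∂μ := by
  have hpos : ∀ ω, 0 < 1 + Y ω := fun ω => by linarith [hY ω]
  rw [integral_pos_iff_support_of_nonneg (fun ω => div_nonneg (hY ω) (hpos ω).le)
    (integrable_div_one_add hYm hY)]
  exact hYpos.trans_le (measure_mono fun ω hω => (div_pos hω (hpos ω)).ne')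

end Saturation

section FixedPoint

variable {Ω : Type*} [MeasurableSpace Ω] (μ : Measure Ω) (X : Ω → ℝ)

noncomputable def loadBalance (σ2 c α t : ℝ) : ℝ :=
  σ2 * t + α * (c * t + ∫ ω, X ω * t / (1 + X ω * t) ∂μ)

lemma loadBalance_eq_mul (σ2 c α t : ℝ) :
    loadBalance μ X σ2 c α t = t * (σ2 + α * c + α * ∫ ω, X ω / (1 + X ω * t) ∂μ) := by
  have h : ∫ ω, X ω * t / (1 + X ω * t) ∂μ = t * ∫ ω, X ω / (1 + X ω * t) ∂μ := by
    rw [← integral_const_mul]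
    congr 1 with ω
    ring
  rw [loadBalance, h]
  ring

variable [IsFiniteMeasure μ] {X} (hXm : Measurable X) (hX : ∀ ω, 0 ≤ X ω)
include hXm hX

lemma monotoneOn_loadBalance {σ2 c α : ℝ} (hσ : 0 ≤ σ2) (hc : 0 ≤ c) (hα : 0 ≤ α) :
    MonotoneOn (loadBalance μ X σ2 c α) (Set.Ici 0) := by
  intro s hs t ht hst
  have hXs : ∀ ω, 0 ≤ X ω * s := fun ω => mul_nonneg (hX ω) hs
  have hint : ∫ ω, X ω * s / (1 + X ω * s) ∂μ ≤ ∫ ω, X ω * t / (1 + X ω * t) ∂μ :=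
    integral_div_one_add_mono (hXm.mul_const s) (hXm.mul_const t) hXs
      fun ω => mul_le_mul_of_nonneg_left hst (hX ω)
  unfold loadBalance
  gcongr

lemma loadBalance_strictMono_left {σ2 c a b t : ℝ} (hXpos : 0 < μ {ω | 0 < X ω})
    (hc : 0 ≤ c) (hab : a < b) (ht : 0 < t) :
    loadBalance μ X σ2 c a t < loadBalance μ X σ2 c b t := by
  have hsupp : {ω | 0 < X ω * t} = {ω | 0 < X ω} := by
    ext ω
    simp only [Set.mem_ofPred_eq, mul_pos_iff_of_pos_right ht]
  have hint : 0 < ∫ ω, X ω * t / (1 + X ω * t) ∂μ :=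
    integral_div_one_add_pos (hXm.mul_const t) (fun ω => mul_nonneg (hX ω) ht.le)
      (hsupp ▸ hXpos)
  unfold loadBalance
  gcongr

end FixedPoint

theorem sinr_perfect_mmse_strict_anti_in_load_general
    {Ω : Type*} [MeasurableSpace Ω] (μ : Measure Ω) [IsProbabilityMeasure μ]
    (X : Ω → ℝ) (hXmeas : Measurable X) (hXnonneg : ∀ ω, 0 ≤ X ω)
    (hXpos : 0 < μ {ω | 0 < X ω})
    (σ2 c β : ℝ) (hσ : 0 < σ2) (hc : 0 ≤ c) (hβ : 0 < β)
    (η : ℝ → ℝ)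
    (hη : ∀ α : ℝ, 0 ≤ α →
      η α ∈ Set.Ioc 0 (1 / σ2) ∧
      η α = (σ2 + α * c + α * ∫ ω, X ω / (1 + X ω * η α) ∂μ)⁻¹) :
    ∀ a b : ℝ, 0 ≤ a → a < b → β * η b < β * η a := by
  have hbalance : ∀ α, 0 ≤ α → loadBalance μ X σ2 c α (η α) = 1 := by
    intro α hα
    obtain ⟨⟨hη0, -⟩, hfix⟩ := hη α hα
    rw [loadBalance_eq_mul]
    set S := σ2 + α * c + α * ∫ ω, X ω / (1 + X ω * η α) ∂μ
    have hS : S ≠ 0 := fun h => hη0.ne' (by rw [hfix, h, inv_zero])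
    rw [hfix, inv_mul_cancel₀ hS]
  intro a b ha hab
  have hb : 0 ≤ b := ha.trans hab.le
  have hηa : 0 < η a := (hη a ha).1.1
  refine mul_lt_mul_of_pos_left (not_le.mp fun hle => ?_) hβ
  have hcontra : (1 : ℝ) < 1 :=
    calc 1 = loadBalance μ X σ2 c a (η a) := (hbalance a ha).symm
      _ < loadBalance μ X σ2 c b (η a) :=
        loadBalance_strictMono_left μ hXmeas hXnonneg hXpos hc hab hηa
      _ ≤ loadBalance μ X σ2 c b (η b) :=
        monotoneOn_loadBalance μ hXmeas hXnonneg hσ.le hc hb hηa.le (hηa.le.trans hle) hle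
      _ = 1 := hbalance b hb
  exact lt_irrefl 1 hcontra

theorem sinr_perfect_mmse_strict_anti_in_load
    {Ω : Type*} [MeasurableSpace Ω] (μ : Measure Ω) [IsProbabilityMeasure μ]
    (X : Ω → ℝ) (hXmeas : Measurable X) (hXnonneg : ∀ ω, 0 ≤ X ω)
    (Mb : ℝ) (hXbdd : ∀ ω, X ω ≤ Mb)
    (hXpos : 0 < μ {ω | 0 < X ω})
    (σ2 c β : ℝ) (hσ : 0 < σ2) (hc : 0 ≤ c) (hβ : 0 < β)
    (η : ℝ → ℝ)
    (hη : ∀ α : ℝ, 0 ≤ α →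
      η α ∈ Set.Ioc 0 (1 / σ2) ∧
      η α = (σ2 + α * c + α * ∫ ω, X ω / (1 + X ω * η α) ∂μ)⁻¹) :
    ∀ a b : ℝ, 0 ≤ a → a < b → β * η b < β * η a :=
  sinr_perfect_mmse_strict_anti_in_load_general μ X hXmeas hXnonneg hXpos σ2 c β hσ hc hβ η hη
end
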